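/- Let L = D^{-1/2} Π Θ' with Θ = ρ B, where D is diagonal with entries in [τ+δ_min, τ+δ_max], Π ∈ ℝ^{N×K} and B ∈ ℝ^{J×K} both have rank K. Then the nonzero eigenvalues of L L' satisfy ρ² λ_K(Π'Π) λ_K(B'B)/(τ+δ_max) ≤ λ_K(LL') ≤ λ₁(LL') ≤ ρ² λ₁(Π'Π) λ₁(B'B)/(τ+δ_min). -/

import Mathlib

/-! If `L Lᵀ v = μ v` with `v ≠ 0`, then `μ ‖v‖² = ‖Lᵀ v‖²`, and `Lᵀ = ρ B Πᵀ D^{-1/2}` is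
estimated factor by factor: `D^{-1/2}` through the bounds on `D`, the other factors through the
Rayleigh bounds `λ_min(AᵀA) ‖x‖² ≤ ‖A x‖² ≤ λ_max(AᵀA) ‖x‖²`, read off an orthonormal eigenbasis
of `AᵀA` (for `Πᵀ`, since `Π Πᵀ` and `Πᵀ Π` share their nonzero eigenvalues). Since `Lᵀ` has a
kernel, the lower bound is proved instead for `w = Lᵀ v`: it is nonzero as `μ ≠ 0`, an
eigenvector of `Lᵀ L` for `μ`, and lies in the range of `B`, where
`‖Bᵀ w‖² ≥ λ_min(BᵀB) ‖w‖²`. -/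

open Matrix Module.End

namespace Matrix

variable {m n p : Type*}

theorem hasEigenvalue_toLin'_iff {R : Type*} [CommRing R] [Fintype n] [DecidableEq n]
    {M : Matrix n n R} {μ : R} : HasEigenvalue (toLin' M) μ ↔ ∃ v ≠ 0, M *ᵥ v = μ • v := by
  simp only [hasEigenvalue_iff, Submodule.ne_bot_iff, mem_eigenspace_iff, toLin'_apply]
  exact ⟨fun ⟨v, hv, hv0⟩ => ⟨v, hv0, hv⟩, fun ⟨v, hv0, hv⟩ => ⟨v, hv, hv0⟩⟩

theorem dotProduct_self_pos [Fintype n] {v : n → ℝ} (hv : v ≠ 0) : 0 < v ⬝ᵥ v := by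
  simpa using dotProduct_star_self_pos_iff.mpr hv

theorem le_of_mul_dotProduct_self_le [Fintype n] {v : n → ℝ} (hv : v ≠ 0) {a b : ℝ}
    (h : a * (v ⬝ᵥ v) ≤ b * (v ⬝ᵥ v)) : a ≤ b :=
  le_of_mul_le_mul_right h (dotProduct_self_pos hv)

theorem smul_dotProduct_smul [Fintype n] (c : ℝ) (v : n → ℝ) :
    (c • v) ⬝ᵥ (c • v) = c ^ 2 * (v ⬝ᵥ v) := by
  rw [smul_dotProduct, dotProduct_smul, smul_eq_mul, smul_eq_mul]; ring

section Spectral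

variable [Fintype n] [DecidableEq n] {M : Matrix n n ℝ}

theorem IsHermitian.hasEigenvalue_eigenvalues (hM : M.IsHermitian) (i : n) :
    HasEigenvalue (toLin' M) (hM.eigenvalues i) :=
  hasEigenvalue_iff_mem_spectrum.mpr <| by
    rw [spectrum_toLin']; exact hM.eigenvalues_mem_spectrum_real i

theorem IsHermitian.eigenvectorBasis_dotProduct_pow_mulVec (hM : M.IsHermitian) (i : n) (k : ℕ)
    (v : n → ℝ) :
    ⇑(hM.eigenvectorBasis i) ⬝ᵥ (M ^ k *ᵥ v) =
      hM.eigenvalues i ^ k * (⇑(hM.eigenvectorBasis i) ⬝ᵥ v) := by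
  induction k with
  | zero => simp
  | succ k ih =>
    have hMt : Mᵀ = M := by simpa using hM.eq
    rw [pow_succ', ← mulVec_mulVec, dotProduct_mulVec, ← mulVec_transpose, hMt,
      hM.mulVec_eigenvectorBasis, smul_dotProduct, ih, smul_eq_mul, pow_succ]
    ring

theorem IsHermitian.pow_mulVec_dotProduct_self (hM : M.IsHermitian) (k : ℕ) (v : n → ℝ) :
    (M ^ k *ᵥ v) ⬝ᵥ v = ∑ i, hM.eigenvalues i ^ k * (⇑(hM.eigenvectorBasis i) ⬝ᵥ v) ^ 2 := by
  have := hM.eigenvectorBasis.sum_inner_mul_inner (WithLp.toLp 2 v) (WithLp.toLp 2 (M ^ k *ᵥ v))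
  simp only [EuclideanSpace.inner_eq_star_dotProduct, star_trivial] at this
  rw [← this]
  refine Finset.sum_congr rfl fun i _ => ?_
  rw [dotProduct_comm (M ^ k *ᵥ v), hM.eigenvectorBasis_dotProduct_pow_mulVec]
  ring

theorem IsHermitian.mul_pow_mulVec_dotProduct_le (hM : M.IsHermitian) {a b : ℝ} {j k : ℕ}
    (h : ∀ μ, HasEigenvalue (toLin' M) μ → a * μ ^ j ≤ b * μ ^ k) (v : n → ℝ) :
    a * ((M ^ j *ᵥ v) ⬝ᵥ v) ≤ b * ((M ^ k *ᵥ v) ⬝ᵥ v) := by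
  simp only [hM.pow_mulVec_dotProduct_self, Finset.mul_sum, ← mul_assoc]
  exact Finset.sum_le_sum fun i _ =>
    mul_le_mul_of_nonneg_right (h _ (hM.hasEigenvalue_eigenvalues i)) (sq_nonneg _)

end Spectral

section Gram

theorem isHermitian_transpose_mul_self [Fintype m] (A : Matrix m n ℝ) : (Aᵀ * A).IsHermitian := by
  simpa using isHermitian_conjTranspose_mul_self A

variable [Fintype m] [Fintype n]

theorem transpose_mul_self_mulVec_dotProduct (A : Matrix m n ℝ) (v : n → ℝ) :
    (Aᵀ * A) *ᵥ v ⬝ᵥ v = (A *ᵥ v) ⬝ᵥ (A *ᵥ v) := by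
  rw [← mulVec_mulVec, dotProduct_comm, dotProduct_mulVec, vecMul_transpose]

theorem mul_transpose_mulVec_dotProduct (A : Matrix m n ℝ) (v : m → ℝ) :
    (A * Aᵀ) *ᵥ v ⬝ᵥ v = (Aᵀ *ᵥ v) ⬝ᵥ (Aᵀ *ᵥ v) := by
  simpa using transpose_mul_self_mulVec_dotProduct Aᵀ v

theorem transpose_mul_self_mulVec_transpose_mulVec (A : Matrix m n ℝ) {μ : ℝ} {v : m → ℝ}
    (hv : (A * Aᵀ) *ᵥ v = μ • v) : (Aᵀ * A) *ᵥ (Aᵀ *ᵥ v) = μ • (Aᵀ *ᵥ v) := by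
  rw [mulVec_mulVec, Matrix.mul_assoc, ← mulVec_mulVec, hv, mulVec_smul]

theorem transpose_mulVec_ne_zero (A : Matrix m n ℝ) {μ : ℝ} {v : m → ℝ}
    (hv : (A * Aᵀ) *ᵥ v = μ • v) (hv0 : v ≠ 0) (hμ : μ ≠ 0) : Aᵀ *ᵥ v ≠ 0 := by
  intro h
  rw [← mulVec_mulVec, h, mulVec_zero, eq_comm, smul_eq_zero] at hv
  exact hv.elim hμ hv0

theorem le_of_mul_transpose_mulVec_eq_smul {A : Matrix m n ℝ} {C μ : ℝ}
    (hC : ∀ x, (Aᵀ *ᵥ x) ⬝ᵥ (Aᵀ *ᵥ x) ≤ C * (x ⬝ᵥ x)) {v : m → ℝ} (hv0 : v ≠ 0)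
    (hv : (A * Aᵀ) *ᵥ v = μ • v) : μ ≤ C := by
  refine le_of_mul_dotProduct_self_le hv0 ?_
  rw [← smul_eq_mul, ← smul_dotProduct, ← hv, mul_transpose_mulVec_dotProduct]
  exact hC v

theorem le_of_transpose_eq_mul_of_mul_transpose_mulVec_eq_smul [Fintype p] {A : Matrix m n ℝ}
    {B : Matrix n p ℝ} {Y : Matrix p m ℝ} {c μ : ℝ} (hY : Aᵀ = B * Y)
    (hc : ∀ a, c * ((B *ᵥ a) ⬝ᵥ (B *ᵥ a)) ≤ (A *ᵥ (B *ᵥ a)) ⬝ᵥ (A *ᵥ (B *ᵥ a)))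
    {v : m → ℝ} (hv0 : v ≠ 0) (hμ : μ ≠ 0) (hv : (A * Aᵀ) *ᵥ v = μ • v) : c ≤ μ := by
  have hw : Aᵀ *ᵥ v = B *ᵥ (Y *ᵥ v) := by rw [hY, mulVec_mulVec]
  refine le_of_mul_dotProduct_self_le (transpose_mulVec_ne_zero A hv hv0 hμ) ?_
  rw [← smul_eq_mul μ, ← smul_dotProduct, ← transpose_mul_self_mulVec_transpose_mulVec A hv,
    transpose_mul_self_mulVec_dotProduct, hw]
  exact hc _

variable [DecidableEq n]

theorem nonneg_of_hasEigenvalue_transpose_mul_self (A : Matrix m n ℝ) {μ : ℝ}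
    (hμ : HasEigenvalue (toLin' (Aᵀ * A)) μ) : 0 ≤ μ := by
  obtain ⟨v, hv0, hv⟩ := hasEigenvalue_toLin'_iff.mp hμ
  have h : μ * (v ⬝ᵥ v) = (A *ᵥ v) ⬝ᵥ (A *ᵥ v) := by
    rw [← transpose_mul_self_mulVec_dotProduct, hv, smul_dotProduct, smul_eq_mul]
  exact nonneg_of_mul_nonneg_left (h ▸ by simpa using dotProduct_star_self_nonneg (A *ᵥ v))
    (dotProduct_self_pos hv0)

theorem mulVec_dotProduct_self_le {A : Matrix m n ℝ} {c : ℝ}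
    (hc : c ∈ upperBounds {μ | HasEigenvalue (toLin' (Aᵀ * A)) μ}) (x : n → ℝ) :
    (A *ᵥ x) ⬝ᵥ (A *ᵥ x) ≤ c * (x ⬝ᵥ x) := by
  simpa [transpose_mul_self_mulVec_dotProduct] using
    (isHermitian_transpose_mul_self A).mul_pow_mulVec_dotProduct_le (a := 1) (b := c)
      (j := 1) (k := 0) (fun μ hμ => by simpa using hc hμ) x

theorem le_mulVec_dotProduct_self {A : Matrix m n ℝ} {c : ℝ}
    (hc : c ∈ lowerBounds {μ | HasEigenvalue (toLin' (Aᵀ * A)) μ}) (x : n → ℝ) :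
    c * (x ⬝ᵥ x) ≤ (A *ᵥ x) ⬝ᵥ (A *ᵥ x) := by
  simpa [transpose_mul_self_mulVec_dotProduct] using
    (isHermitian_transpose_mul_self A).mul_pow_mulVec_dotProduct_le (a := c) (b := 1)
      (j := 0) (k := 1) (fun μ hμ => by simpa using hc hμ) x

theorem le_transpose_mulVec_mulVec_dotProduct_self {A : Matrix m n ℝ} {c : ℝ}
    (hc : c ∈ lowerBounds {μ | HasEigenvalue (toLin' (Aᵀ * A)) μ}) (x : n → ℝ) :
    c * ((A *ᵥ x) ⬝ᵥ (A *ᵥ x)) ≤ (Aᵀ *ᵥ (A *ᵥ x)) ⬝ᵥ (Aᵀ *ᵥ (A *ᵥ x)) := by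
  have hμ : ∀ μ, HasEigenvalue (toLin' (Aᵀ * A)) μ → c * μ ^ 1 ≤ 1 * μ ^ 2 := fun μ hμ => by
    nlinarith [hc hμ, nonneg_of_hasEigenvalue_transpose_mul_self A hμ]
  have hsq : (Aᵀ * A) ^ 2 = (Aᵀ * A)ᵀ * (Aᵀ * A) := by
    rw [sq, transpose_mul, transpose_transpose]
  have := (isHermitian_transpose_mul_self A).mul_pow_mulVec_dotProduct_le hμ x
  rwa [pow_one, one_mul, hsq, transpose_mul_self_mulVec_dotProduct,
    transpose_mul_self_mulVec_dotProduct, ← mulVec_mulVec] at this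

variable [DecidableEq m]

theorem hasEigenvalue_transpose_mul_self_of_mul_transpose (A : Matrix m n ℝ) {μ : ℝ}
    (hμ : μ ≠ 0) (h : HasEigenvalue (toLin' (A * Aᵀ)) μ) :
    HasEigenvalue (toLin' (Aᵀ * A)) μ := by
  obtain ⟨v, hv0, hv⟩ := hasEigenvalue_toLin'_iff.mp h
  exact hasEigenvalue_toLin'_iff.mpr
    ⟨_, transpose_mulVec_ne_zero A hv hv0 hμ, transpose_mul_self_mulVec_transpose_mulVec A hv⟩

theorem transpose_mulVec_dotProduct_self_le {A : Matrix m n ℝ} {c : ℝ}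
    (hc : c ∈ upperBounds {μ | HasEigenvalue (toLin' (Aᵀ * A)) μ}) (hc0 : 0 ≤ c) (y : m → ℝ) :
    (Aᵀ *ᵥ y) ⬝ᵥ (Aᵀ *ᵥ y) ≤ c * (y ⬝ᵥ y) := by
  refine mulVec_dotProduct_self_le (fun μ hμ => ?_) y
  rw [transpose_transpose] at hμ
  obtain rfl | hμ0 := eq_or_ne μ 0
  · exact hc0
  · exact hc (hasEigenvalue_transpose_mul_self_of_mul_transpose A hμ0 hμ)

end Gram

theorem diagonal_mulVec_dotProduct_self_le [Fintype m] [DecidableEq m] {s : m → ℝ} {c : ℝ}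
    (hs : ∀ i, s i ^ 2 ≤ c) (x : m → ℝ) :
    (diagonal s *ᵥ x) ⬝ᵥ (diagonal s *ᵥ x) ≤ c * (x ⬝ᵥ x) := by
  simp only [mulVec_diagonal, dotProduct, Finset.mul_sum]
  exact Finset.sum_le_sum fun i _ => by nlinarith [hs i, mul_self_nonneg (x i)]

theorem le_diagonal_mulVec_dotProduct_self [Fintype m] [DecidableEq m] {s : m → ℝ} {c : ℝ}
    (hs : ∀ i, c ≤ s i ^ 2) (x : m → ℝ) :
    c * (x ⬝ᵥ x) ≤ (diagonal s *ᵥ x) ⬝ᵥ (diagonal s *ᵥ x) := by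
  simp only [mulVec_diagonal, dotProduct, Finset.mul_sum]
  exact Finset.sum_le_sum fun i _ => by nlinarith [hs i, mul_self_nonneg (x i)]

section Factorization

variable {ρ : ℝ} {s : m → ℝ} {P : Matrix m n ℝ} {B : Matrix p n ℝ} {L : Matrix m p ℝ}

theorem transpose_eq_mul_of_eq_smul_diagonal_mul_mul_transpose [Fintype m] [Fintype n]
    [DecidableEq m] (hL : L = ρ • (diagonal s * P * Bᵀ)) : Lᵀ = B * (ρ • (Pᵀ * diagonal s)) := by
  simp [hL, transpose_mul, Matrix.mul_assoc]

variable [Fintype m] [Fintype n] [Fintype p] [DecidableEq m] [DecidableEq n]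

theorem transpose_mulVec_dotProduct_self_le_of_eq_smul_diagonal_mul_mul_transpose
    (hL : L = ρ • (diagonal s * P * Bᵀ)) {hi cP cB : ℝ} (hs : ∀ i, s i ^ 2 ≤ hi)
    (hP : cP ∈ upperBounds {μ | HasEigenvalue (toLin' (Pᵀ * P)) μ}) (hP0 : 0 ≤ cP)
    (hB : cB ∈ upperBounds {μ | HasEigenvalue (toLin' (Bᵀ * B)) μ}) (hB0 : 0 ≤ cB)
    (x : m → ℝ) : (Lᵀ *ᵥ x) ⬝ᵥ (Lᵀ *ᵥ x) ≤ ρ ^ 2 * cP * cB * hi * (x ⬝ᵥ x) := by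
  set y := Pᵀ *ᵥ (diagonal s *ᵥ x)
  have hLx : Lᵀ *ᵥ x = B *ᵥ (ρ • y) := by
    rw [transpose_eq_mul_of_eq_smul_diagonal_mul_mul_transpose hL, ← mulVec_mulVec, smul_mulVec,
      ← mulVec_mulVec]
  calc (Lᵀ *ᵥ x) ⬝ᵥ (Lᵀ *ᵥ x) ≤ cB * ((ρ • y) ⬝ᵥ (ρ • y)) := hLx ▸ mulVec_dotProduct_self_le hB _
    _ = ρ ^ 2 * cB * (y ⬝ᵥ y) := by rw [smul_dotProduct_smul]; ring
    _ ≤ ρ ^ 2 * cB * (cP * ((diagonal s *ᵥ x) ⬝ᵥ (diagonal s *ᵥ x))) := by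
      gcongr; exact transpose_mulVec_dotProduct_self_le hP hP0 _
    _ ≤ ρ ^ 2 * cB * (cP * (hi * (x ⬝ᵥ x))) := by
      gcongr; exact diagonal_mulVec_dotProduct_self_le hs x
    _ = ρ ^ 2 * cP * cB * hi * (x ⬝ᵥ x) := by ring

theorem le_mulVec_mulVec_dotProduct_self_of_eq_smul_diagonal_mul_mul_transpose
    (hL : L = ρ • (diagonal s * P * Bᵀ)) {lo cP cB : ℝ} (hs : ∀ i, lo ≤ s i ^ 2) (hlo : 0 ≤ lo)
    (hP : cP ∈ lowerBounds {μ | HasEigenvalue (toLin' (Pᵀ * P)) μ}) (hP0 : 0 ≤ cP)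
    (hB : cB ∈ lowerBounds {μ | HasEigenvalue (toLin' (Bᵀ * B)) μ}) (a : n → ℝ) :
    ρ ^ 2 * cP * cB * lo * ((B *ᵥ a) ⬝ᵥ (B *ᵥ a)) ≤ (L *ᵥ (B *ᵥ a)) ⬝ᵥ (L *ᵥ (B *ᵥ a)) := by
  set y := Bᵀ *ᵥ (B *ᵥ a)
  have hLBa : L *ᵥ (B *ᵥ a) = ρ • (diagonal s *ᵥ (P *ᵥ y)) := by
    rw [hL, smul_mulVec, ← mulVec_mulVec, ← mulVec_mulVec]
  calc ρ ^ 2 * cP * cB * lo * ((B *ᵥ a) ⬝ᵥ (B *ᵥ a))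
      = ρ ^ 2 * lo * cP * (cB * ((B *ᵥ a) ⬝ᵥ (B *ᵥ a))) := by ring
    _ ≤ ρ ^ 2 * lo * cP * (y ⬝ᵥ y) := by
      gcongr; exact le_transpose_mulVec_mulVec_dotProduct_self hB a
    _ ≤ ρ ^ 2 * lo * ((P *ᵥ y) ⬝ᵥ (P *ᵥ y)) := by
      rw [mul_assoc _ cP]; gcongr; exact le_mulVec_dotProduct_self hP y
    _ ≤ ρ ^ 2 * ((diagonal s *ᵥ (P *ᵥ y)) ⬝ᵥ (diagonal s *ᵥ (P *ᵥ y))) := by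
      rw [mul_assoc]; gcongr; exact le_diagonal_mulVec_dotProduct_self hs _
    _ = (L *ᵥ (B *ᵥ a)) ⬝ᵥ (L *ᵥ (B *ᵥ a)) := by rw [hLBa, smul_dotProduct_smul]

end Factorization

end Matrix

theorem laplacian_eigenvalue_bounds_general {N J K : ℕ}
    (ρ τ δmin δmax : ℝ) (hτ : 0 ≤ τ) (hδmin : 0 < δmin)
    (hδ : δmin ≤ δmax)
    (d : Fin N → ℝ) (hd : ∀ i, τ + δmin ≤ d i ∧ d i ≤ τ + δmax)
    (Pm : Matrix (Fin N) (Fin K) ℝ) (B : Matrix (Fin J) (Fin K) ℝ)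
    (L : Matrix (Fin N) (Fin J) ℝ)
    (hL : L = ρ • (Matrix.diagonal (fun i => (Real.sqrt (d i))⁻¹) * Pm * Bᵀ))
    (lam1P lamKP lam1B lamKB : ℝ)
    (hlam1P : IsGreatest {μ : ℝ |
      Module.End.HasEigenvalue (Matrix.toLin' (Pmᵀ * Pm)) μ} lam1P)
    (hlamKP : IsLeast {μ : ℝ |
      Module.End.HasEigenvalue (Matrix.toLin' (Pmᵀ * Pm)) μ} lamKP)
    (hlam1B : IsGreatest {μ : ℝ |
      Module.End.HasEigenvalue (Matrix.toLin' (Bᵀ * B)) μ} lam1B)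
    (hlamKB : IsLeast {μ : ℝ |
      Module.End.HasEigenvalue (Matrix.toLin' (Bᵀ * B)) μ} lamKB) :
    ∀ μ : ℝ, Module.End.HasEigenvalue (Matrix.toLin' (L * Lᵀ)) μ → μ ≠ 0 →
      ρ ^ 2 * lamKP * lamKB / (τ + δmax) ≤ μ ∧
      μ ≤ ρ ^ 2 * lam1P * lam1B / (τ + δmin) := by
  intro μ hμ hμ0
  obtain ⟨v, hv0, hv⟩ := hasEigenvalue_toLin'_iff.mp hμ
  have hs : ∀ i, (√(d i))⁻¹ ^ 2 = (d i)⁻¹ := fun i => by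
    rw [inv_pow, Real.sq_sqrt (by linarith [(hd i).1])]
  have hs_lo : ∀ i, (τ + δmax)⁻¹ ≤ (√(d i))⁻¹ ^ 2 := fun i => by
    rw [hs]; exact inv_anti₀ (by linarith [(hd i).1]) (hd i).2
  have hs_hi : ∀ i, (√(d i))⁻¹ ^ 2 ≤ (τ + δmin)⁻¹ := fun i => by
    rw [hs]; exact inv_anti₀ (by linarith) (hd i).1
  have hKP := nonneg_of_hasEigenvalue_transpose_mul_self Pm hlamKP.1
  have h1P := nonneg_of_hasEigenvalue_transpose_mul_self Pm hlam1P.1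
  have h1B := nonneg_of_hasEigenvalue_transpose_mul_self B hlam1B.1
  rw [div_eq_mul_inv, div_eq_mul_inv]
  exact ⟨le_of_transpose_eq_mul_of_mul_transpose_mulVec_eq_smul
      (transpose_eq_mul_of_eq_smul_diagonal_mul_mul_transpose hL)
      (le_mulVec_mulVec_dotProduct_self_of_eq_smul_diagonal_mul_mul_transpose hL hs_lo
        (inv_nonneg.mpr (by linarith)) hlamKP.2 hKP hlamKB.2) hv0 hμ0 hv,
    le_of_mul_transpose_mulVec_eq_smul
      (transpose_mulVec_dotProduct_self_le_of_eq_smul_diagonal_mul_mul_transpose hL hs_hi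
        hlam1P.2 h1P hlam1B.2 h1B) hv0 hv⟩

/-- the nonzero eigenvalues of `L Lᵀ` with `L = ρ D^{-1/2} Π Bᵀ`
lie in `[ρ² λ_K(ΠᵀΠ) λ_K(BᵀB)/(τ+δmax), ρ² λ₁(ΠᵀΠ) λ₁(BᵀB)/(τ+δmin)]`. -/
theorem laplacian_eigenvalue_bounds {N J K : ℕ}
    (ρ τ δmin δmax : ℝ) (hρ : 0 < ρ) (hτ : 0 ≤ τ) (hδmin : 0 < δmin)
    (hδ : δmin ≤ δmax)
    (d : Fin N → ℝ) (hd : ∀ i, τ + δmin ≤ d i ∧ d i ≤ τ + δmax)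
    (Pm : Matrix (Fin N) (Fin K) ℝ) (B : Matrix (Fin J) (Fin K) ℝ)
    (hPrank : Pm.rank = K) (hBrank : B.rank = K)
    (L : Matrix (Fin N) (Fin J) ℝ)
    (hL : L = ρ • (Matrix.diagonal (fun i => (Real.sqrt (d i))⁻¹) * Pm * Bᵀ))
    (lam1P lamKP lam1B lamKB : ℝ)
    (hlam1P : IsGreatest {μ : ℝ |
      Module.End.HasEigenvalue (Matrix.toLin' (Pmᵀ * Pm)) μ} lam1P)
    (hlamKP : IsLeast {μ : ℝ |
      Module.End.HasEigenvalue (Matrix.toLin' (Pmᵀ * Pm)) μ} lamKP)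
    (hlam1B : IsGreatest {μ : ℝ |
      Module.End.HasEigenvalue (Matrix.toLin' (Bᵀ * B)) μ} lam1B)
    (hlamKB : IsLeast {μ : ℝ |
      Module.End.HasEigenvalue (Matrix.toLin' (Bᵀ * B)) μ} lamKB) :
    ∀ μ : ℝ, Module.End.HasEigenvalue (Matrix.toLin' (L * Lᵀ)) μ → μ ≠ 0 →
      ρ ^ 2 * lamKP * lamKB / (τ + δmax) ≤ μ ∧
      μ ≤ ρ ^ 2 * lam1P * lam1B / (τ + δmin) :=
  laplacian_eigenvalue_bounds_general ρ τ δmin δmax hτ hδmin hδ d hd Pm B L hL lam1P lamKP lam1B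
    lamKB hlam1P hlamKP hlam1B hlamKB
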